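/- Let G be the 'ceiling fan' graph with an even number n ≥ 2 of leaves: the vertices are a hub H and n leaves, each leaf is joined to the hub by a weight-1 edge, the leaves are partitioned into n/2 pairs and the two leaves of each pair are joined by a weight-1 edge, and all other weights are zero. Then the remeeting times satisfy τ⁺_H = (9n − 3)/(n + 3) and τ⁺_L = 15n/(2(n + 3)) for every leaf L, and the critical benefit-to-cost ratio of G satisfies (b/c)* = 4(6n − 7)/(3n − 16); in particular (b/c)* → 8 as n → ∞. -/

import Mathlib

/-!
By the maximum principle the coalescence system has at most one solution, so it suffices to
exhibit one. The solution is invariant under the automorphisms of the fan: it is `A` between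
the hub and a leaf, `X` between partner leaves and `Y` between leaves of different pairs, and the
system becomes the linear system `X = 1 + A / 2`, `Y = 1 + (A + Y) / 2`,
`A = 1 + (Y + (X - 2 Y) / n + A / 2) / 2`.

As `τ` is symmetric, `∑ⱼ p⁽ⁿ⁾ᵢⱼ τᵢⱼ = (Pⁿ τ)ᵢᵢ`. Left multiplication by the step matrix `P`
preserves the six-dimensional space of automorphism-invariant matrices, acting on it by an
explicit linear map, so `τ⁺` and `τ⁽ⁿ⁾` are read off from the first three iterates of that map.
-/

open Finset Filter Asymptotics

noncomputable section

namespace EvoGraph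

variable {V : Type*} [Fintype V] [DecidableEq V]

/-- Weighted degree `w_i = ∑_j w_{ij}`. -/
def deg (w : V → V → ℝ) (i : V) : ℝ := ∑ j, w i j

/-- Total edge weight `W = ∑_i w_i`. -/
def Wtot (w : V → V → ℝ) : ℝ := ∑ i, deg w i

/-- Random-walk step probability `p_{ij} = w_{ij}/w_i`. -/
def step (w : V → V → ℝ) (i j : V) : ℝ := w i j / deg w i

/-- The stochastic matrix `(p_{ij})`. -/
def stepMat (w : V → V → ℝ) : Matrix V V ℝ := Matrix.of fun i j => step w i j

/-- `n`-step probability `p^{(n)}_{ij}`: the `(i,j)` entry of the `n`-th power of `(p_{ij})`. -/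
def stepN (w : V → V → ℝ) (n : ℕ) (i j : V) : ℝ := (stepMat w ^ n) i j

/-- Stationary distribution `π_i = w_i / W`. -/
def statDist (w : V → V → ℝ) (i : V) : ℝ := deg w i / Wtot w

/-- `w` is a finite connected weighted graph: symmetric nonnegative weights
(self-loops allowed), positive weighted degrees, and any two vertices joined by
a path of edges of positive weight. -/
def IsWeightedGraph (w : V → V → ℝ) : Prop :=
  (∀ i j, w i j = w j i) ∧ (∀ i j, 0 ≤ w i j) ∧ (∀ i, 0 < deg w i) ∧
  ∀ i j : V, Relation.ReflTransGen (fun a b => 0 < w a b) i j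

/-- `τ` is the (symmetric) solution of the coalescence-time system:
`τ_{ii} = 0`, and `τ_{ij} = 1 + (1/2) ∑_k (p_{ik} τ_{kj} + p_{jk} τ_{ik})` for `i ≠ j`. -/
def IsCoalescent (w : V → V → ℝ) (τ : V → V → ℝ) : Prop :=
  (∀ i j, τ i j = τ j i) ∧ (∀ i, τ i i = 0) ∧
  ∀ i j, i ≠ j →
    τ i j = 1 + (1 / 2) * ∑ k, (step w i k * τ k j + step w j k * τ i k)

/-- `τ^{(n)} = ∑_{i,j} π_i p^{(n)}_{ij} τ_{ij}`. -/
def tauWalk (w τ : V → V → ℝ) (n : ℕ) : ℝ :=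
  ∑ i, ∑ j, statDist w i * stepN w n i j * τ i j

/-- Remeeting time `τ⁺_i = 1 + ∑_j p_{ij} τ_{ij}`. -/
def remeet (w τ : V → V → ℝ) (i : V) : ℝ := 1 + ∑ j, step w i j * τ i j

/-- The "ceiling fan" with `2m` leaves: hub `none`; leaves `some (p, b)` come in
`m` pairs indexed by `p : Fin m`. Each leaf is joined to the hub by a weight-1
edge, the two leaves of each pair are joined by a weight-1 edge, and all other
weights are zero. -/
def fanW (m : ℕ) : Option (Fin m × Bool) → Option (Fin m × Bool) → ℝ
  | none, some _ => 1
  | some _, none => 1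
  | some (p, b), some (q, c) => if p = q ∧ b ≠ c then 1 else 0
  | none, none => 0

end EvoGraph

namespace EvoGraph

section General

variable {V : Type*} [Fintype V] {w : V → V → ℝ}

lemma sum_step_eq_one (hdeg : ∀ i, 0 < deg w i) (i : V) : ∑ j, step w i j = 1 := by
  simp only [step, ← Finset.sum_div]
  exact div_self (hdeg i).ne'

lemma step_nonneg (hw : ∀ i j, 0 ≤ w i j) (hdeg : ∀ i, 0 < deg w i) (i j : V) :
    0 ≤ step w i j :=
  div_nonneg (hw i j) (hdeg i).le

lemma eq_max_of_adj (hw : ∀ i j, 0 ≤ w i j) (hdeg : ∀ i, 0 < deg w i) {d : V → V → ℝ} {M : ℝ}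
    (hM : ∀ i j, d i j ≤ M) {a b : V}
    (hd_ab : d a b = (1 / 2) * ∑ k, (step w a k * d k b + step w b k * d a k))
    (hab : d a b = M) {k : V} (hk : 0 < w a k) : d k b = M := by
  have hsum : ∑ k, (step w a k * (M - d k b) + step w b k * (M - d a k)) = 0 := by
    rw [Finset.sum_add_distrib] at hd_ab
    simp only [mul_sub, Finset.sum_add_distrib, Finset.sum_sub_distrib, ← Finset.sum_mul,
      sum_step_eq_one hdeg]
    linarith
  have h1 : ∀ k, 0 ≤ step w a k * (M - d k b) := fun k =>
    mul_nonneg (step_nonneg hw hdeg a k) (sub_nonneg.2 (hM k b))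
  have h2 : ∀ k, 0 ≤ step w b k * (M - d a k) := fun k =>
    mul_nonneg (step_nonneg hw hdeg b k) (sub_nonneg.2 (hM a k))
  have hk0 := (Finset.sum_eq_zero_iff_of_nonneg fun k _ => add_nonneg (h1 k) (h2 k)).1 hsum k
    (mem_univ k)
  have hak : step w a k * (M - d k b) = 0 := by linarith [h1 k, h2 k]
  linarith [(mul_eq_zero.1 hak).resolve_left (div_pos hk (hdeg a)).ne']

/-- The difference `τ - τ'` solves the homogeneous system, so its maximum, attained at some
`(a, b)`, spreads along a path from `a` to `b` to the diagonal, where it vanishes. -/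
lemma IsCoalescent.le (hw : ∀ i j, 0 ≤ w i j) (hdeg : ∀ i, 0 < deg w i)
    (hconn : ∀ i j, Relation.ReflTransGen (fun a b => 0 < w a b) i j)
    {τ τ' : V → V → ℝ} (hτ : IsCoalescent w τ) (hτ' : IsCoalescent w τ') (i j : V) :
    τ i j ≤ τ' i j := by
  obtain ⟨-, hτ0, hτeq⟩ := hτ
  obtain ⟨-, hτ0', hτeq'⟩ := hτ'
  set d : V → V → ℝ := fun i j => τ i j - τ' i j
  have hd_eq : ∀ a b, a ≠ b →
      d a b = (1 / 2) * ∑ k, (step w a k * d k b + step w b k * d a k) := by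
    intro a b hab
    simp only [d, hτeq a b hab, hτeq' a b hab, mul_sub, Finset.sum_add_distrib,
      Finset.sum_sub_distrib]
    ring
  obtain ⟨⟨a, b⟩, -, hmax⟩ := Finset.exists_max_image univ (fun p : V × V => d p.1 p.2)
    ⟨(i, j), mem_univ _⟩
  have hM : ∀ i j, d i j ≤ d a b := fun i j => hmax (i, j) (mem_univ _)
  have hreach : ∀ c, Relation.ReflTransGen (fun a b => 0 < w a b) c b → d c b = d a b →
      d b b = d a b := by
    intro c hc
    induction hc using Relation.ReflTransGen.head_induction_on with
    | refl => exact id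
    | @head c c' hcc' _ ih =>
      intro hc
      by_cases hcb : c = b
      · rwa [hcb] at hc
      · exact ih (eq_max_of_adj hw hdeg hM (hd_eq c b hcb) hc hcc')
  have hdiag : d b b = 0 := by simp [d, hτ0, hτ0']
  have hij := hM i j
  rw [← hreach a (hconn a b) rfl, hdiag] at hij
  exact sub_nonpos.1 hij

lemma IsCoalescent.unique (hw : ∀ i j, 0 ≤ w i j) (hdeg : ∀ i, 0 < deg w i)
    (hconn : ∀ i j, Relation.ReflTransGen (fun a b => 0 < w a b) i j)
    {τ τ' : V → V → ℝ} (hτ : IsCoalescent w τ) (hτ' : IsCoalescent w τ') : τ = τ' :=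
  funext₂ fun i j => (hτ.le hw hdeg hconn hτ' i j).antisymm (hτ'.le hw hdeg hconn hτ i j)

lemma isCoalescent_of_mul {τ : V → V → ℝ} (hτ : ∀ i j, τ i j = τ j i)
    (hτ0 : ∀ i, τ i i = 0)
    (h : ∀ i j, i ≠ j →
      τ i j = 1 + ((stepMat w * Matrix.of τ) i j + (stepMat w * Matrix.of τ) j i) / 2) :
    IsCoalescent w τ := by
  refine ⟨hτ, hτ0, fun i j hij => ?_⟩
  rw [h i j hij, Finset.sum_add_distrib]
  simp only [Matrix.mul_apply, stepMat, Matrix.of_apply, hτ i]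
  ring

variable [DecidableEq V]

lemma sum_stepN_mul_eq_diag {τ : V → V → ℝ} (hτ : ∀ i j, τ i j = τ j i) (n : ℕ) (i : V) :
    ∑ j, stepN w n i j * τ i j = (stepMat w ^ n * Matrix.of τ) i i := by
  simp only [stepN, Matrix.mul_apply, Matrix.of_apply, hτ i]

lemma tauWalk_eq_sum_diag {τ : V → V → ℝ} (hτ : ∀ i j, τ i j = τ j i) (n : ℕ) :
    tauWalk w τ n = ∑ i, statDist w i * (stepMat w ^ n * Matrix.of τ) i i := by
  simp only [tauWalk, mul_assoc, ← Finset.mul_sum, sum_stepN_mul_eq_diag hτ]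

lemma remeet_eq_diag {τ : V → V → ℝ} (hτ : ∀ i j, τ i j = τ j i) (i : V) :
    remeet w τ i = 1 + (stepMat w * Matrix.of τ) i i := by
  rw [← pow_one (stepMat w), ← sum_stepN_mul_eq_diag hτ]
  simp [remeet, stepN, stepMat]

end General

section Fan

variable {m : ℕ}

def partner (L : Fin m × Bool) : Fin m × Bool := (L.1, !L.2)

lemma partner_involutive : Function.Involutive (partner (m := m)) := fun L => by
  simp [partner]

lemma partner_ne (L : Fin m × Bool) : partner L ≠ L := by
  simp [partner, Prod.ext_iff]

lemma card_leaves : Fintype.card (Fin m × Bool) = 2 * m := by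
  simp [mul_comm]

lemma fanW_some_some (L L' : Fin m × Bool) :
    fanW m (some L) (some L') = if L' = partner L then 1 else 0 := by
  obtain ⟨p, b⟩ := L
  obtain ⟨q, c⟩ := L'
  simp only [fanW, partner, Prod.ext_iff]
  congr 1
  cases b <;> cases c <;> simp [eq_comm]

lemma fanW_nonneg (i j : Option (Fin m × Bool)) : 0 ≤ fanW m i j := by
  rcases i with _ | L <;> rcases j with _ | L'
  · exact le_rfl
  · exact zero_le_one
  · exact zero_le_one
  · rw [fanW_some_some]; split_ifs <;> norm_num

lemma deg_fanW_none : deg (fanW m) none = 2 * m := by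
  simp [deg, fanW]
  ring

lemma deg_fanW_some (L : Fin m × Bool) : deg (fanW m) (some L) = 2 := by
  simp only [deg, Fintype.sum_option, fanW_some_some, Finset.sum_ite_eq', mem_univ, if_true]
  norm_num [fanW]

lemma deg_fanW_pos (hm : m ≠ 0) (i : Option (Fin m × Bool)) : 0 < deg (fanW m) i := by
  rcases i with _ | L
  · rw [deg_fanW_none]; positivity
  · rw [deg_fanW_some]; norm_num

lemma fanW_connected (i j : Option (Fin m × Bool)) :
    Relation.ReflTransGen (fun a b => 0 < fanW m a b) i j := by
  have to_hub : ∀ i, Relation.ReflTransGen (fun a b => 0 < fanW m a b) i none := by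
    rintro (_ | L)
    · exact .refl
    · exact .single (by norm_num [fanW])
  have from_hub : ∀ j, Relation.ReflTransGen (fun a b => 0 < fanW m a b) none j := by
    rintro (_ | L)
    · exact .refl
    · exact .single (by norm_num [fanW])
  exact (to_hub i).trans (from_hub j)

lemma stepMat_fanW_mul_apply_none (M : Matrix (Option (Fin m × Bool)) (Option (Fin m × Bool)) ℝ)
    (j : Option (Fin m × Bool)) :
    (stepMat (fanW m) * M) none j = (∑ L, M (some L) j) / (2 * m) := by
  simp [Matrix.mul_apply, stepMat, step, deg_fanW_none, fanW, div_eq_inv_mul, Finset.mul_sum]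

lemma stepMat_fanW_mul_apply_some (M : Matrix (Option (Fin m × Bool)) (Option (Fin m × Bool)) ℝ)
    (L : Fin m × Bool) (j : Option (Fin m × Bool)) :
    (stepMat (fanW m) * M) (some L) j = (M none j + M (some (partner L)) j) / 2 := by
  simp only [Matrix.mul_apply, stepMat, step, Matrix.of_apply, Fintype.sum_option,
    deg_fanW_some, fanW_some_some, ite_div, ite_mul, zero_div, zero_mul,
    Finset.sum_ite_eq', mem_univ, if_true]
  norm_num [fanW]
  ring

/-- The parameters of a matrix on the fan invariant under its automorphisms (permuting the pairs,
swapping the two leaves of a pair): `leaf` is the entry between leaves of different pairs, to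
which `self` is added on the diagonal and `mate` between partners. -/
structure FanKernel where
  hub : ℝ
  hubLeaf : ℝ
  leafHub : ℝ
  leaf : ℝ
  self : ℝ
  mate : ℝ

namespace FanKernel

def entry (K : FanKernel) (m : ℕ) : Option (Fin m × Bool) → Option (Fin m × Bool) → ℝ
  | none, none => K.hub
  | none, some _ => K.hubLeaf
  | some _, none => K.leafHub
  | some L, some L' =>
    K.leaf + (if L' = L then K.self else 0) + (if L' = partner L then K.mate else 0)

def walk (m : ℕ) (K : FanKernel) : FanKernel where
  hub := K.leafHub
  hubLeaf := K.leaf + (K.self + K.mate) / (2 * m)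
  leafHub := (K.hub + K.leafHub) / 2
  leaf := (K.hubLeaf + K.leaf) / 2
  self := K.mate / 2
  mate := K.self / 2

variable (K : FanKernel)

@[simp] lemma entry_none_none : K.entry m none none = K.hub := rfl
@[simp] lemma entry_none_some (L : Fin m × Bool) : K.entry m none (some L) = K.hubLeaf := rfl
@[simp] lemma entry_some_none (L : Fin m × Bool) : K.entry m (some L) none = K.leafHub := rfl

lemma entry_some_some (L L' : Fin m × Bool) :
    K.entry m (some L) (some L') =
      K.leaf + (if L' = L then K.self else 0) + (if L' = partner L then K.mate else 0) := rfl

@[simp] lemma entry_diag (L : Fin m × Bool) :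
    K.entry m (some L) (some L) = K.leaf + K.self := by
  simp [entry_some_some, (partner_ne L).symm]

lemma entry_comm (hK : K.hubLeaf = K.leafHub) (i j : Option (Fin m × Bool)) :
    K.entry m i j = K.entry m j i := by
  rcases i with _ | L <;> rcases j with _ | L'
  · rfl
  · exact hK
  · exact hK.symm
  · simp only [entry_some_some, eq_comm (a := L'), partner_involutive.eq_iff]

lemma sum_entry_some_some (L' : Fin m × Bool) :
    ∑ L, K.entry m (some L) (some L') = 2 * m * K.leaf + K.self + K.mate := by
  simp only [entry_some_some, partner_involutive.eq_iff, eq_comm (a := L'),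
    Finset.sum_add_distrib, Finset.sum_ite_eq', mem_univ, if_true, Finset.sum_const,
    card_univ, card_leaves, nsmul_eq_mul]
  push_cast
  ring

lemma stepMat_fanW_mul_entry (hm : m ≠ 0) :
    stepMat (fanW m) * Matrix.of (K.entry m) = Matrix.of ((K.walk m).entry m) := by
  ext (_ | L) (_ | L')
  · simp [stepMat_fanW_mul_apply_none, walk]
    field_simp
  · simp only [stepMat_fanW_mul_apply_none, Matrix.of_apply, sum_entry_some_some,
      entry_none_some, walk]
    field_simp
    ring
  · simp [stepMat_fanW_mul_apply_some, walk]
  · simp only [stepMat_fanW_mul_apply_some, Matrix.of_apply, entry_none_some, entry_some_some,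
      partner_involutive L, walk]
    split_ifs <;> ring

lemma stepMat_fanW_pow_mul_entry (hm : m ≠ 0) (n : ℕ) :
    stepMat (fanW m) ^ n * Matrix.of (K.entry m) = Matrix.of (((walk m)^[n] K).entry m) := by
  induction n with
  | zero => simp
  | succ n ih =>
    rw [pow_succ', mul_assoc, ih, stepMat_fanW_mul_entry _ hm,
      Function.iterate_succ_apply']

lemma sum_statDist_fanW_mul_diag (hm : m ≠ 0) :
    ∑ i, statDist (fanW m) i * K.entry m i i = (K.hub + 2 * (K.leaf + K.self)) / 3 := by
  have hW : Wtot (fanW m) = 6 * m := by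
    simp only [Wtot, Fintype.sum_option, deg_fanW_none, deg_fanW_some, Finset.sum_const,
      card_univ, card_leaves, nsmul_eq_mul]
    push_cast
    ring
  simp only [Fintype.sum_option, statDist, hW, deg_fanW_none, deg_fanW_some, entry_none_none,
    entry_diag, Finset.sum_const, card_univ, card_leaves, nsmul_eq_mul]
  field_simp
  push_cast
  ring

lemma tauWalk_fanW (hm : m ≠ 0) (hK : K.hubLeaf = K.leafHub) (n : ℕ) :
    tauWalk (fanW m) (K.entry m) n =
      (((walk m)^[n] K).hub + 2 * (((walk m)^[n] K).leaf + ((walk m)^[n] K).self)) / 3 := by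
  rw [tauWalk_eq_sum_diag (K.entry_comm hK), stepMat_fanW_pow_mul_entry _ hm]
  exact sum_statDist_fanW_mul_diag _ hm

end FanKernel

def coalKernel (m : ℕ) : FanKernel :=
  let A : ℝ := (16 * m - 6) / (2 * m + 3)
  let X : ℝ := 10 * m / (2 * m + 3)
  let Y : ℝ := 20 * m / (2 * m + 3)
  ⟨0, A, A, Y, -Y, X - Y⟩

lemma isCoalescent_coalKernel (hm : m ≠ 0) :
    IsCoalescent (fanW m) ((coalKernel m).entry m) := by
  have hsymm := (coalKernel m).entry_comm (m := m) rfl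
  refine isCoalescent_of_mul hsymm ?_ ?_
  · rintro (_ | L) <;> simp [coalKernel]
  simp only [FanKernel.stepMat_fanW_mul_entry _ hm, Matrix.of_apply]
  have h2m3 : (2 * m + 3 : ℝ) ≠ 0 := by positivity
  suffices hub_leaf : ∀ L : Fin m × Bool, (coalKernel m).entry m none (some L) =
      1 + (((coalKernel m).walk m).entry m none (some L) +
        ((coalKernel m).walk m).entry m (some L) none) / 2 by
    rintro (_ | L) (_ | L') hne
    · exact absurd rfl hne
    · exact hub_leaf L'
    · rw [hsymm, hub_leaf, add_comm (FanKernel.entry _ _ none _)]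
    · have hne' : L' ≠ L := fun h => hne (congrArg some h.symm)
      simp only [FanKernel.entry_some_some, if_neg hne', eq_comm (a := L),
        partner_involutive.eq_iff, coalKernel, FanKernel.walk]
      split_ifs <;> field_simp <;> ring
  intro L
  simp only [FanKernel.entry_none_some, FanKernel.entry_some_none, coalKernel,
    FanKernel.walk]
  field_simp
  ring

lemma tauWalk_coalKernel (hm : m ≠ 0) :
    tauWalk (fanW m) ((coalKernel m).entry m) 1 = (14 * m - 4) / (2 * m + 3) ∧
    tauWalk (fanW m) ((coalKernel m).entry m) 2 = (12 * m - 7) / (2 * m + 3) ∧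
    tauWalk (fanW m) ((coalKernel m).entry m) 3 = (31 * m - 16) / (2 * (2 * m + 3)) := by
  have h2m3 : (2 * m + 3 : ℝ) ≠ 0 := by positivity
  simp only [(coalKernel m).tauWalk_fanW hm rfl]
  simp only [Function.iterate_succ_apply', Function.iterate_zero_apply, FanKernel.walk,
    coalKernel]
  refine ⟨?_, ?_, ?_⟩ <;> field_simp <;> ring

lemma remeet_coalKernel_none (hm : m ≠ 0) :
    remeet (fanW m) ((coalKernel m).entry m) none =
      (9 * (2 * m : ℝ) - 3) / ((2 * m : ℝ) + 3) := by
  have h2m3 : (2 * m + 3 : ℝ) ≠ 0 := by positivity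
  rw [remeet_eq_diag ((coalKernel m).entry_comm rfl), FanKernel.stepMat_fanW_mul_entry _ hm]
  simp only [Matrix.of_apply, FanKernel.entry_none_none, FanKernel.walk, coalKernel]
  field_simp
  ring

lemma remeet_coalKernel_some (hm : m ≠ 0) (L : Fin m × Bool) :
    remeet (fanW m) ((coalKernel m).entry m) (some L) =
      15 * (2 * m : ℝ) / (2 * ((2 * m : ℝ) + 3)) := by
  have h2m3 : (2 * m + 3 : ℝ) ≠ 0 := by positivity
  rw [remeet_eq_diag ((coalKernel m).entry_comm rfl), FanKernel.stepMat_fanW_mul_entry _ hm]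
  simp only [Matrix.of_apply, FanKernel.entry_diag, FanKernel.walk, coalKernel]
  field_simp
  ring

lemma tauWalk_ratio_coalKernel (hm : m ≠ 0) :
    tauWalk (fanW m) ((coalKernel m).entry m) 2 /
        (tauWalk (fanW m) ((coalKernel m).entry m) 3 -
          tauWalk (fanW m) ((coalKernel m).entry m) 1) =
      4 * (6 * (2 * m : ℝ) - 7) / (3 * (2 * m : ℝ) - 16) := by
  have h2m3 : (2 * m + 3 : ℝ) ≠ 0 := by positivity
  have h3m8 : (3 * m - 8 : ℝ) ≠ 0 :=
    sub_ne_zero.2 (by exact_mod_cast (by omega : 3 * m ≠ 8))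
  have h6m16 : (3 * (2 * m) - 16 : ℝ) ≠ 0 := by contrapose! h3m8; linarith
  obtain ⟨h1, h2, h3⟩ := tauWalk_coalKernel hm
  have hdiff : (31 * m - 16 : ℝ) / (2 * (2 * m + 3)) - (14 * m - 4) / (2 * m + 3) =
      (3 * m - 8) / (2 * (2 * m + 3)) := by
    field_simp
    ring
  rw [h1, h2, h3, hdiff, div_div_eq_mul_div, div_eq_div_iff h3m8 h6m16]
  field_simp
  ring

end Fan

lemma tendsto_bc_ratio :
    Tendsto (fun k : ℕ => 4 * (6 * (2 * k : ℝ) - 7) / (3 * (2 * k : ℝ) - 16)) atTop (nhds 8) := by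
  have hden : Tendsto (fun k : ℕ => 3 * (2 * k : ℝ) - 16) atTop atTop :=
    tendsto_atTop_add_const_right _ _
      ((tendsto_natCast_atTop_atTop.const_mul_atTop (by norm_num : (0 : ℝ) < 6)).congr
        fun k => by ring)
  have hlim := (tendsto_const_nhds (x := (8 : ℝ))).add
    ((tendsto_const_nhds (x := (100 : ℝ))).div_atTop hden)
  rw [add_zero] at hlim
  refine hlim.congr' ?_
  filter_upwards [eventually_ge_atTop 3] with k hk
  have hk' : (3 : ℝ) ≤ k := by exact_mod_cast hk
  have hne : 3 * (2 * k : ℝ) - 16 ≠ 0 := by linarith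
  rw [eq_div_iff hne, add_mul, div_mul_cancel₀ _ hne]
  ring

/-- for the ceiling fan with `n = 2m` leaves (`n ≥ 2` even),
`τ⁺_H = (9n − 3)/(n + 3)`, `τ⁺_L = 15n/(2(n + 3))` for every leaf, and
`(b/c)* = 4(6n − 7)/(3n − 16)`, which tends to `8` as `n → ∞`. -/
theorem ceilingFan_bc (m : ℕ) (hm : 1 ≤ m)
    (τ : Option (Fin m × Bool) → Option (Fin m × Bool) → ℝ)
    (hτ : IsCoalescent (fanW m) τ) :
    remeet (fanW m) τ none = (9 * (2 * m : ℝ) - 3) / ((2 * m : ℝ) + 3) ∧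
    (∀ L : Fin m × Bool,
      remeet (fanW m) τ (some L) = 15 * (2 * m : ℝ) / (2 * ((2 * m : ℝ) + 3))) ∧
    tauWalk (fanW m) τ 2 / (tauWalk (fanW m) τ 3 - tauWalk (fanW m) τ 1) =
      4 * (6 * (2 * m : ℝ) - 7) / (3 * (2 * m : ℝ) - 16) ∧
    Tendsto
      (fun k : ℕ => 4 * (6 * (2 * k : ℝ) - 7) / (3 * (2 * k : ℝ) - 16))
      atTop (nhds 8) := by
  have hm0 : m ≠ 0 := by omega
  obtain rfl : τ = (coalKernel m).entry m :=
    hτ.unique fanW_nonneg (deg_fanW_pos hm0) fanW_connected (isCoalescent_coalKernel hm0)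
  exact ⟨remeet_coalKernel_none hm0, remeet_coalKernel_some hm0, tauWalk_ratio_coalKernel hm0,
    tendsto_bc_ratio⟩

end EvoGraph
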